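/- arXiv:math/0501211 — 8 statements merged into one kernel-verified Lean document; each statement's English description precedes it below -/
import Mathlib

section
/- For any graph G with n vertices and m edges, the sum of d_i·d_j over all edges {i,j} is at least 4m³/n². -/
open Finset

/-! Let `S` be the set of ordered pairs of adjacent vertices, so `#S = 2m`, and put
`w (i, j) = √d_i * √d_j`. Two applications of Cauchy–Schwarz give
`#S ^ 3 ≤ (∑_S w ^ 2) * (∑_S w⁻¹) ^ 2`, and by AM–GM and the symmetry of `S`,
`∑_S w⁻¹ ≤ ∑_S d_i⁻¹ = #{i | d_i ≠ 0} ≤ n`. -/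

theorem Finset.card_pow_three_le_sum_sq_mul_sq_sum_inv {ι R : Type*} [Field R] [LinearOrder R]
    [IsStrictOrderedRing R] (s : Finset ι) {w : ι → R} (hw : ∀ i ∈ s, 0 < w i) :
    (#s : R) ^ 3 ≤ (∑ i ∈ s, w i ^ 2) * (∑ i ∈ s, (w i)⁻¹) ^ 2 := by
  have hcard : (#s : R) ^ 2 ≤ (∑ i ∈ s, w i) * ∑ i ∈ s, (w i)⁻¹ := by
    simpa using sum_sq_le_sum_mul_sum_of_sq_le_mul s (r := fun _ => (1 : R))
      (fun i hi => (hw i hi).le) (fun i hi => (inv_pos.2 (hw i hi)).le)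
      (fun i hi => by rw [one_pow, mul_inv_cancel₀ (hw i hi).ne'])
  have hsum : (∑ i ∈ s, w i) ^ 2 ≤ #s * ∑ i ∈ s, w i ^ 2 := sq_sum_le_card_mul_sum_sq
  rcases (Nat.cast_nonneg (α := R) #s).eq_or_lt with hs | hs
  · rw [← hs, zero_pow three_ne_zero]
    exact mul_nonneg (sum_nonneg fun i _ => sq_nonneg _) (sq_nonneg _)
  refine le_of_mul_le_mul_left ?_ hs
  calc (#s : R) * #s ^ 3 = (#s ^ 2) ^ 2 := by ring
    _ ≤ ((∑ i ∈ s, w i) * ∑ i ∈ s, (w i)⁻¹) ^ 2 := pow_le_pow_left₀ (sq_nonneg _) hcard 2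
    _ = (∑ i ∈ s, w i) ^ 2 * (∑ i ∈ s, (w i)⁻¹) ^ 2 := mul_pow ..
    _ ≤ (#s * ∑ i ∈ s, w i ^ 2) * (∑ i ∈ s, (w i)⁻¹) ^ 2 := by gcongr
    _ = #s * ((∑ i ∈ s, w i ^ 2) * (∑ i ∈ s, (w i)⁻¹) ^ 2) := mul_assoc ..

namespace SimpleGraph

variable {V : Type*} [Fintype V] (G : SimpleGraph V) [DecidableRel G.Adj]

def adjPairs : Finset (V × V) := univ.filter fun p => G.Adj p.1 p.2

theorem sum_adjPairs_fst {M : Type*} [AddCommMonoid M] (f : V → M) :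
    ∑ p ∈ G.adjPairs, f p.1 = ∑ v, G.degree v • f v := by
  rw [adjPairs, ← univ_product_univ, sum_filter, sum_product]
  refine sum_congr rfl fun v _ => ?_
  rw [← sum_filter, ← card_neighborFinset_eq_degree, neighborFinset_eq_filter, ← sum_const]

theorem sum_adjPairs_snd {M : Type*} [AddCommMonoid M] (f : V → M) :
    ∑ p ∈ G.adjPairs, f p.2 = ∑ p ∈ G.adjPairs, f p.1 :=
  sum_nbij' Prod.swap Prod.swap (by simp [adjPairs, adj_comm]) (by simp [adjPairs, adj_comm])
    (by simp) (by simp) (by simp)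

theorem card_adjPairs : #G.adjPairs = 2 * #G.edgeFinset := by
  have := G.sum_adjPairs_fst fun _ => 1
  simpa [sum_degrees_eq_twice_card_edges] using this

theorem sum_adjPairs_mul_le_sum_sq (f : V → ℝ) :
    ∑ p ∈ G.adjPairs, f p.1 * f p.2 ≤ ∑ v, G.degree v • f v ^ 2 := by
  calc ∑ p ∈ G.adjPairs, f p.1 * f p.2
      ≤ ∑ p ∈ G.adjPairs, (f p.1 ^ 2 + f p.2 ^ 2) / 2 :=
        sum_le_sum fun p _ => by linarith [two_mul_le_add_sq (f p.1) (f p.2)]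
    _ = ∑ v, G.degree v • f v ^ 2 := by
        rw [← sum_div _ _ (2 : ℝ), sum_add_distrib, G.sum_adjPairs_snd fun v => f v ^ 2,
          add_self_div_two]
        exact G.sum_adjPairs_fst fun v => f v ^ 2

theorem sum_adjPairs_inv_sqrt_degree_mul_le_card :
    ∑ p ∈ G.adjPairs, (√(G.degree p.1 : ℝ) * √(G.degree p.2 : ℝ))⁻¹ ≤ Fintype.card V := by
  simp_rw [mul_inv]
  refine (G.sum_adjPairs_mul_le_sum_sq fun v => (√(G.degree v : ℝ))⁻¹).trans ?_
  rw [Fintype.card_eq_sum_ones, Nat.cast_sum]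
  refine sum_le_sum fun v _ => ?_
  rw [nsmul_eq_mul, inv_pow, Real.sq_sqrt (Nat.cast_nonneg _), Nat.cast_one]
  exact mul_inv_le_one

end SimpleGraph

/-- For any graph `G` with `n` vertices and `m` edges, the sum of `d_i * d_j` over all
edges `{i,j}` (each edge counted once) is at least `4 m^3 / n^2`. The sum over edges is
written as half the sum over ordered adjacent pairs. -/
theorem edge_degree_product_lower_bound (n : ℕ) (G : SimpleGraph (Fin n))
    [DecidableRel G.Adj] :
    (1 / 2 : ℝ) *
        ∑ p ∈ Finset.univ.filter (fun p : Fin n × Fin n => G.Adj p.1 p.2),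
          (G.degree p.1 : ℝ) * (G.degree p.2 : ℝ) ≥
      4 * (G.edgeFinset.card : ℝ) ^ 3 / (n : ℝ) ^ 2 := by
  change _ * ∑ p ∈ G.adjPairs, _ ≥ _
  set w : Fin n × Fin n → ℝ := fun p => √(G.degree p.1 : ℝ) * √(G.degree p.2 : ℝ)
  have hw_pos : ∀ p ∈ G.adjPairs, 0 < w p := fun p hp => by
    have hadj : G.Adj p.1 p.2 := (mem_filter.1 hp).2
    have := hadj.degree_pos_left
    have := hadj.degree_pos_right
    positivity
  have hw_sq : ∀ p, w p ^ 2 = G.degree p.1 * G.degree p.2 := fun p => by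
    simp only [w, mul_pow, Real.sq_sqrt (Nat.cast_nonneg _)]
  have hcube := G.adjPairs.card_pow_three_le_sum_sq_mul_sq_sum_inv hw_pos
  simp only [hw_sq, G.card_adjPairs] at hcube
  have hinv : (∑ p ∈ G.adjPairs, (w p)⁻¹) ^ 2 ≤ (n : ℝ) ^ 2 := by
    have hnonneg : 0 ≤ ∑ p ∈ G.adjPairs, (w p)⁻¹ :=
      sum_nonneg fun p hp => (inv_pos.2 (hw_pos p hp)).le
    simpa using pow_le_pow_left₀ hnonneg G.sum_adjPairs_inv_sqrt_degree_mul_le_card 2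
  refine div_le_of_le_mul₀ (by positivity) (by positivity) ?_
  calc 4 * (#G.edgeFinset : ℝ) ^ 3 = ((2 * #G.edgeFinset : ℕ) : ℝ) ^ 3 / 2 := by push_cast; ring
    _ ≤ (∑ p ∈ G.adjPairs, (G.degree p.1 : ℝ) * G.degree p.2) *
          (∑ p ∈ G.adjPairs, (w p)⁻¹) ^ 2 / 2 := by gcongr
    _ ≤ (∑ p ∈ G.adjPairs, (G.degree p.1 : ℝ) * G.degree p.2) * (n : ℝ) ^ 2 / 2 := by gcongr
    _ = _ := by ring
end

section
/- For any graph G with n vertices and no isolated vertices, the sum over all edges {i,j} of 1/√(d_i·d_j) is at most n/2. -/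
open Finset

private lemma amgm_inv_sqrt (a b : ℝ) (ha : 0 < a) (hb : 0 < b) :
    1 / Real.sqrt (a * b) ≤ 1 / (2 * a) + 1 / (2 * b) := by
  have hs : Real.sqrt (a * b) = Real.sqrt a * Real.sqrt b := Real.sqrt_mul ha.le b
  have hsa : 0 < Real.sqrt a := Real.sqrt_pos.mpr ha
  have hsb : 0 < Real.sqrt b := Real.sqrt_pos.mpr hb
  have ha2 : Real.sqrt a ^ 2 = a := Real.sq_sqrt ha.le
  have hb2 : Real.sqrt b ^ 2 = b := Real.sq_sqrt hb.le
  rw [hs, div_add_div _ _ (by positivity) (by positivity), div_le_div_iff₀ (by positivity) (by positivity)]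
  nlinarith [sq_nonneg (Real.sqrt a - Real.sqrt b), mul_pos hsa hsb]

/-- For any graph `G` on `n` vertices with no isolated vertices, the sum over all edges
`{i,j}` (each counted once, written as half the ordered sum) of `1/√(d_i d_j)` is at most
`n/2`. -/
theorem edge_inv_sqrt_degree_sum_upper_bound (n : ℕ) (G : SimpleGraph (Fin n))
    [DecidableRel G.Adj] (h : ∀ i : Fin n, 0 < G.degree i) :
    (1 / 2 : ℝ) *
        ∑ p ∈ Finset.univ.filter (fun p : Fin n × Fin n => G.Adj p.1 p.2),
          1 / Real.sqrt ((G.degree p.1 : ℝ) * (G.degree p.2 : ℝ)) ≤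
      (n : ℝ) / 2 := by
  set E := Finset.univ.filter (fun p : Fin n × Fin n => G.Adj p.1 p.2) with hE
  have key : ∀ f : Fin n × Fin n → ℝ,
      ∑ p ∈ E, f p = ∑ i, ∑ j ∈ G.neighborFinset i, f (i, j) := by
    intro f
    rw [hE, Finset.sum_filter, ← Finset.univ_product_univ, Finset.sum_product]
    refine Finset.sum_congr rfl fun i _ => ?_
    rw [SimpleGraph.neighborFinset_eq_filter, Finset.sum_filter]
  -- the swap symmetry
  have hswap : ∑ p ∈ E, (1 : ℝ) / (2 * (G.degree p.2 : ℝ))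
      = ∑ p ∈ E, (1 : ℝ) / (2 * (G.degree p.1 : ℝ)) := by
    refine Finset.sum_nbij' (fun p => Prod.swap p) (fun p => Prod.swap p) ?_ ?_ ?_ ?_ ?_
    · intro p hp
      simp only [hE, Finset.mem_filter, Finset.mem_univ, true_and] at hp ⊢
      exact hp.symm
    · intro p hp
      simp only [hE, Finset.mem_filter, Finset.mem_univ, true_and] at hp ⊢
      exact hp.symm
    · intro p _; simp
    · intro p _; simp
    · intro p _; rfl
  have hfirst : ∑ p ∈ E, (1 : ℝ) / (2 * (G.degree p.1 : ℝ)) = (n : ℝ) / 2 := by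
    rw [key]
    have : ∀ i : Fin n, ∑ j ∈ G.neighborFinset i, (1 : ℝ) / (2 * (G.degree i : ℝ))
        = (1 : ℝ) / 2 := by
      intro i
      rw [Finset.sum_const, SimpleGraph.card_neighborFinset_eq_degree, nsmul_eq_mul]
      have hd : (0 : ℝ) < (G.degree i : ℝ) := by exact_mod_cast h i
      field_simp
    simp only [this, Finset.sum_const, Finset.card_univ, Fintype.card_fin, nsmul_eq_mul]
    ring
  have hle : ∑ p ∈ E, 1 / Real.sqrt ((G.degree p.1 : ℝ) * (G.degree p.2 : ℝ))
      ≤ ∑ p ∈ E, ((1 : ℝ) / (2 * (G.degree p.1 : ℝ)) + 1 / (2 * (G.degree p.2 : ℝ))) := by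
    refine Finset.sum_le_sum fun p hp => ?_
    exact amgm_inv_sqrt _ _ (by exact_mod_cast h p.1) (by exact_mod_cast h p.2)
  rw [Finset.sum_add_distrib, hswap, hfirst] at hle
  linarith
end

section
/- For any graph G with n vertices, m edges, and no isolated vertices, the sum over all edges {i,j} of √(d_i·d_j) is at least 2m²/n. -/
open Finset

lemma sqrt_mul_le_half_add (x y : ℝ) (hx : 0 ≤ x) (hy : 0 ≤ y) :
    Real.sqrt (x * y) ≤ (x + y) / 2 := by
  nlinarith [sq_nonneg (Real.sqrt x - Real.sqrt y), Real.sq_sqrt hx, Real.sq_sqrt hy,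
    Real.sqrt_mul_self hx, Real.sqrt_nonneg (x*y), Real.sqrt_mul hx y]

/-- For any graph `G` on `n` vertices with `m` edges and no isolated vertices, the sum over
all edges `{i,j}` (each counted once, written as half the ordered sum) of `√(d_i d_j)` is at
least `2 m^2 / n`. -/
theorem edge_sqrt_degree_sum_lower_bound (n : ℕ) (G : SimpleGraph (Fin n))
    [DecidableRel G.Adj] (h : ∀ i : Fin n, 0 < G.degree i) :
    (1 / 2 : ℝ) *
        ∑ p ∈ Finset.univ.filter (fun p : Fin n × Fin n => G.Adj p.1 p.2),
          Real.sqrt ((G.degree p.1 : ℝ) * (G.degree p.2 : ℝ)) ≥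
      2 * (G.edgeFinset.card : ℝ) ^ 2 / (n : ℝ) := by
  classical
  set T := Finset.univ.filter (fun p : Fin n × Fin n => G.Adj p.1 p.2) with hT
  set d : Fin n → ℝ := fun i => (G.degree i : ℝ) with hd
  have hdpos : ∀ i, 0 < d i := fun i => by simp only [hd]; exact_mod_cast h i
  set S := ∑ p ∈ T, Real.sqrt (d p.1 * d p.2) with hS
  set S' := ∑ p ∈ T, (Real.sqrt (d p.1 * d p.2))⁻¹ with hS'
  have hsqrtpos : ∀ p : Fin n × Fin n, 0 < Real.sqrt (d p.1 * d p.2) := fun p =>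
    Real.sqrt_pos.mpr (mul_pos (hdpos _) (hdpos _))
  have hSnonneg : 0 ≤ S := Finset.sum_nonneg fun p _ => (hsqrtpos p).le
  -- |T| = 2m
  have hcard : (T.card : ℝ) = 2 * (G.edgeFinset.card : ℝ) := by
    have := G.two_mul_card_edgeFinset
    rw [hT]
    push_cast [← this]
    ring
  -- Cauchy-Schwarz: |T|^2 ≤ S * S'
  have hCS : ((T.card : ℝ)) ^ 2 ≤ S * S' := by
    have := sum_mul_sq_le_sq_mul_sq T
      (fun p => Real.sqrt (Real.sqrt (d p.1 * d p.2)))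
      (fun p => (Real.sqrt (Real.sqrt (d p.1 * d p.2)))⁻¹)
    have h1 : ∑ p ∈ T, Real.sqrt (Real.sqrt (d p.1 * d p.2)) *
        (Real.sqrt (Real.sqrt (d p.1 * d p.2)))⁻¹ = (T.card : ℝ) := by
      rw [Finset.sum_congr rfl fun p _ => mul_inv_cancel₀
        (ne_of_gt (Real.sqrt_pos.mpr (hsqrtpos p)))]
      simp
    have h2 : ∀ p : Fin n × Fin n, Real.sqrt (Real.sqrt (d p.1 * d p.2)) ^ 2 =
        Real.sqrt (d p.1 * d p.2) := fun p => Real.sq_sqrt (hsqrtpos p).le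
    have h3 : ∀ p : Fin n × Fin n, (Real.sqrt (Real.sqrt (d p.1 * d p.2)))⁻¹ ^ 2 =
        (Real.sqrt (d p.1 * d p.2))⁻¹ := fun p => by rw [inv_pow, h2 p]
    calc ((T.card : ℝ)) ^ 2 = (∑ p ∈ T, Real.sqrt (Real.sqrt (d p.1 * d p.2)) *
          (Real.sqrt (Real.sqrt (d p.1 * d p.2)))⁻¹) ^ 2 := by rw [h1]
      _ ≤ (∑ p ∈ T, Real.sqrt (Real.sqrt (d p.1 * d p.2)) ^ 2) *
          (∑ p ∈ T, (Real.sqrt (Real.sqrt (d p.1 * d p.2)))⁻¹ ^ 2) := this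
      _ = S * S' := by
          rw [hS, hS', Finset.sum_congr rfl fun p _ => h2 p,
            Finset.sum_congr rfl fun p _ => h3 p]
  -- S' ≤ n
  have hS'le : S' ≤ (n : ℝ) := by
    have hstep : ∀ p ∈ T, (Real.sqrt (d p.1 * d p.2))⁻¹ ≤
        (2 * d p.1)⁻¹ + (2 * d p.2)⁻¹ := by
      intro p _
      have h1 : Real.sqrt ((d p.1)⁻¹ * (d p.2)⁻¹) ≤ ((d p.1)⁻¹ + (d p.2)⁻¹) / 2 :=
        sqrt_mul_le_half_add _ _ (by positivity) (by positivity)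
      have h2 : (Real.sqrt (d p.1 * d p.2))⁻¹ = Real.sqrt ((d p.1)⁻¹ * (d p.2)⁻¹) := by
        rw [← mul_inv, ← Real.sqrt_inv]
      rw [h2]
      refine h1.trans_eq ?_
      field_simp
    have hsum : ∑ p ∈ T, ((2 * d p.1)⁻¹ + (2 * d p.2)⁻¹) = (n : ℝ) := by
      rw [hT, Finset.sum_filter, Fintype.sum_prod_type]
      have key : ∀ (c : Fin n → ℝ) (swap : Bool),
          True := fun _ _ => trivial
      have h1 : ∀ i : Fin n, ∑ j : Fin n,
          (if G.Adj i j then ((2 * d i)⁻¹ + (2 * d j)⁻¹) else 0)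
          = (G.degree i : ℝ) * (2 * d i)⁻¹ + ∑ j ∈ G.neighborFinset i, (2 * d j)⁻¹ := by
        intro i
        rw [← Finset.sum_filter]
        have : Finset.univ.filter (G.Adj i) = G.neighborFinset i := by
          ext j; simp [SimpleGraph.neighborFinset]
        rw [this, Finset.sum_add_distrib, Finset.sum_const, SimpleGraph.card_neighborFinset_eq_degree]
        simp [mul_comm]
      rw [Finset.sum_congr rfl fun i _ => h1 i, Finset.sum_add_distrib]
      have hterm : ∀ i : Fin n, (G.degree i : ℝ) * (2 * d i)⁻¹ = 1 / 2 := by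
        intro i
        rw [mul_inv, mul_comm ((2:ℝ))⁻¹, ← mul_assoc, hd]
        rw [mul_inv_cancel₀ (by exact_mod_cast (h i).ne' : ((G.degree i : ℝ)) ≠ 0), one_mul]
        norm_num
      have hA : ∑ i : Fin n, (G.degree i : ℝ) * (2 * d i)⁻¹ = (n : ℝ) / 2 := by
        rw [Finset.sum_congr rfl fun i _ => hterm i, Finset.sum_const, Finset.card_univ,
          Fintype.card_fin, nsmul_eq_mul]
        ring
      have hB : ∑ i : Fin n, ∑ j ∈ G.neighborFinset i, (2 * d j)⁻¹ = (n : ℝ) / 2 := by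
        rw [Finset.sum_comm' (s := Finset.univ) (t := fun i => G.neighborFinset i)
          (t' := Finset.univ) (s' := fun j => G.neighborFinset j)
          (fun i j => by simp [SimpleGraph.mem_neighborFinset, SimpleGraph.adj_comm])]
        have : ∀ j : Fin n, ∑ _i ∈ G.neighborFinset j, (2 * d j)⁻¹ = (1 : ℝ) / 2 := by
          intro j
          rw [Finset.sum_const, SimpleGraph.card_neighborFinset_eq_degree, nsmul_eq_mul]
          have := hterm j
          rw [hd] at this ⊢
          linarith [this]
        rw [Finset.sum_congr rfl fun j _ => this j, Finset.sum_const, Finset.card_univ,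
          Fintype.card_fin, nsmul_eq_mul]
        ring
      rw [hA, hB]; ring
    calc S' ≤ ∑ p ∈ T, ((2 * d p.1)⁻¹ + (2 * d p.2)⁻¹) := Finset.sum_le_sum hstep
      _ = (n : ℝ) := hsum
  rcases Nat.eq_zero_or_pos n with hn | hn
  · subst hn
    have : G.edgeFinset.card = 0 := by
      simp [Finset.card_eq_zero, Finset.eq_empty_iff_forall_notMem]
    rw [this]
    simpa using hSnonneg
  · have hnpos : (0 : ℝ) < n := by exact_mod_cast hn
    rw [ge_iff_le, div_le_iff₀ hnpos]
    have : (T.card : ℝ)^2 ≤ S * (n : ℝ) := by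
      nlinarith [hCS, mul_le_mul_of_nonneg_left hS'le hSnonneg]
    rw [hcard] at this
    nlinarith
end

section
/- For any graph G on vertex set [n], 2·Σ_{i∼j} d_i·d_j = Σ_{i∈[n]} d_i² + 2·Σ_{i∈[n]} d_i·t_i + Σ_{i≁j} (d_i + d_j)·|N_i ∩ N_j|, where the first sum on the left is over edges (each counted once), t_i is the number of triangles containing i, and the last sum is over unordered pairs of distinct nonadjacent vertices. -/
open Finset

/-- The number of triangles of `G` containing the vertex `i`. -/
def triCount {n : ℕ} (G : SimpleGraph (Fin n)) [DecidableRel G.Adj] (i : Fin n) : ℕ :=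
  ((G.cliqueFinset 3).filter (fun s => i ∈ s)).card

section AuxLemmas

variable {n : ℕ} (G : SimpleGraph (Fin n)) [DecidableRel G.Adj]

lemma aux_tri_rep {i : Fin n} {s : Finset (Fin n)}
    (hs : s ∈ (G.cliqueFinset 3).filter (fun s => i ∈ s)) :
    ∃ x y, G.Adj i x ∧ G.Adj i y ∧ G.Adj x y ∧ s = {i, x, y} := by
  rw [mem_filter, SimpleGraph.mem_cliqueFinset_iff, SimpleGraph.is3Clique_iff] at hs
  obtain ⟨⟨a, b, c, hab, hac, hbc, rfl⟩, hi⟩ := hs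
  simp only [mem_insert, mem_singleton] at hi
  rcases hi with rfl | rfl | rfl
  · exact ⟨b, c, hab, hac, hbc, rfl⟩
  · exact ⟨a, c, hab.symm, hbc, hac, by ext x; simp; tauto⟩
  · exact ⟨a, b, hac.symm, hbc.symm, hab, by ext x; simp; tauto⟩

lemma aux_Ecard (i : Fin n) :
    ((G.neighborFinset i ×ˢ G.neighborFinset i).filter (fun p => G.Adj p.1 p.2)).card
      = 2 * triCount G i := by
  have hmaps : ∀ p ∈ (G.neighborFinset i ×ˢ G.neighborFinset i).filter
      (fun p => G.Adj p.1 p.2),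
      insert i {p.1, p.2} ∈ (G.cliqueFinset 3).filter (fun s => i ∈ s) := by
    rintro ⟨x, y⟩ hp
    simp only [mem_filter, mem_product, SimpleGraph.mem_neighborFinset] at hp ⊢
    obtain ⟨⟨h1, h2⟩, h3⟩ := hp
    refine ⟨SimpleGraph.mem_cliqueFinset_iff.mpr
      (SimpleGraph.is3Clique_triple_iff.mpr ⟨h1, h2, h3⟩), by simp⟩
  have key : ∀ s ∈ (G.cliqueFinset 3).filter (fun s => i ∈ s),
      (((G.neighborFinset i ×ˢ G.neighborFinset i).filter
        (fun p => G.Adj p.1 p.2)).filter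
          (fun p : Fin n × Fin n => (insert i {p.1, p.2} : Finset (Fin n)) = s)).card
        = 2 := by
    intro s hs
    obtain ⟨x, y, hix, hiy, hxy, rfl⟩ := aux_tri_rep G hs
    have hfib : ((G.neighborFinset i ×ˢ G.neighborFinset i).filter
        (fun p => G.Adj p.1 p.2)).filter
          (fun p : Fin n × Fin n => (insert i {p.1, p.2} : Finset (Fin n)) = {i, x, y})
        = {(x, y), (y, x)} := by
      ext ⟨a, b⟩
      simp only [mem_filter, mem_product, SimpleGraph.mem_neighborFinset,
        mem_insert, mem_singleton, Prod.mk.injEq]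
      constructor
      · rintro ⟨⟨⟨ha, hb⟩, hab⟩, heq⟩
        have hne : ({a, b} : Finset (Fin n)) = {x, y} := by
          have h1 : i ∉ ({a, b} : Finset (Fin n)) := by
            simp only [mem_insert, mem_singleton]
            push_neg
            exact ⟨ha.ne, hb.ne⟩
          have h2 : i ∉ ({x, y} : Finset (Fin n)) := by
            simp only [mem_insert, mem_singleton]
            push_neg
            exact ⟨hix.ne, hiy.ne⟩
          calc ({a, b} : Finset (Fin n))
              = (insert i ({a, b} : Finset (Fin n))).erase i :=
                (Finset.erase_insert h1).symm
            _ = (insert i ({x, y} : Finset (Fin n))).erase i := by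
                rw [show insert i ({a, b} : Finset (Fin n))
                    = insert i ({x, y} : Finset (Fin n)) from heq]
            _ = {x, y} := Finset.erase_insert h2
        have ha' : a = x ∨ a = y := by
          have := hne ▸ (Finset.mem_insert_self a {b}); simpa using this
        have hb' : b = x ∨ b = y := by
          have : b ∈ ({a, b} : Finset (Fin n)) := by simp
          rw [hne] at this; simpa using this
        rcases ha' with rfl | rfl
        · rcases hb' with rfl | rfl
          · exact absurd rfl hab.ne
          · left; exact ⟨rfl, rfl⟩
        · rcases hb' with rfl | rfl
          · right; exact ⟨rfl, rfl⟩
          · exact absurd rfl hab.ne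
      · rintro (⟨rfl, rfl⟩ | ⟨rfl, rfl⟩)
        · exact ⟨⟨⟨hix, hiy⟩, hxy⟩, rfl⟩
        · exact ⟨⟨⟨hiy, hix⟩, hxy.symm⟩, by rw [Finset.pair_comm]⟩
    rw [hfib]
    exact Finset.card_pair (by simp [hxy.ne, Prod.ext_iff])
  rw [Finset.card_eq_sum_card_fiberwise hmaps, triCount,
    Finset.sum_congr rfl key, Finset.sum_const, smul_eq_mul, mul_comm]

lemma aux_card_inter (i j : Fin n) :
    (G.neighborFinset i ∩ G.neighborFinset j).card
      = ∑ k ∈ G.neighborFinset i, if G.Adj j k then 1 else 0 := by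
  rw [← Finset.card_filter]
  congr 1
  ext k
  simp [SimpleGraph.mem_neighborFinset, and_comm]

lemma aux_L2 (i : Fin n) :
    ∑ j ∈ G.neighborFinset i, (G.neighborFinset i ∩ G.neighborFinset j).card
      = 2 * triCount G i := by
  have h1 : ∑ j ∈ G.neighborFinset i,
      (G.neighborFinset i ∩ G.neighborFinset j).card
      = ((G.neighborFinset i ×ˢ G.neighborFinset i).filter
          (fun p => G.Adj p.1 p.2)).card := by
    rw [Finset.card_filter, Finset.sum_product]
    exact Finset.sum_congr rfl fun j _ => (aux_card_inter G i j).trans rfl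
  rw [h1, aux_Ecard]

lemma aux_L1 (i : Fin n) :
    (∑ j ∈ Finset.univ.filter (fun j => j ≠ i),
        (G.neighborFinset i ∩ G.neighborFinset j).card) + G.degree i
      = ∑ k ∈ G.neighborFinset i, G.degree k := by
  calc (∑ j ∈ Finset.univ.filter (fun j => j ≠ i),
        (G.neighborFinset i ∩ G.neighborFinset j).card) + G.degree i
      = (∑ k ∈ G.neighborFinset i, ∑ j ∈ Finset.univ.filter (fun j => j ≠ i),
          if G.Adj j k then 1 else 0) + G.degree i := by
        rw [Finset.sum_comm]
        exact congrArg (· + G.degree i)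
          (Finset.sum_congr rfl fun j _ => aux_card_inter G i j)
    _ = (∑ k ∈ G.neighborFinset i, (G.degree k - 1)) + G.degree i := by
        congr 1
        refine Finset.sum_congr rfl fun k hk => ?_
        rw [← Finset.card_filter]
        have : Finset.filter (fun j => G.Adj j k)
            (Finset.univ.filter (fun j => j ≠ i))
            = (G.neighborFinset k).erase i := by
          ext j
          simp [SimpleGraph.mem_neighborFinset, G.adj_comm, and_comm]
        rw [this, Finset.card_erase_of_mem, G.card_neighborFinset_eq_degree]
        rw [SimpleGraph.mem_neighborFinset] at hk ⊢
        exact hk.symm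
    _ = ∑ k ∈ G.neighborFinset i, G.degree k := by
        rw [← G.card_neighborFinset_eq_degree i]
        rw [Finset.card_eq_sum_ones, ← Finset.sum_add_distrib]
        refine Finset.sum_congr rfl fun k hk => ?_
        have hpos : 0 < G.degree k := by
          rw [← G.card_neighborFinset_eq_degree]
          refine Finset.card_pos.mpr ⟨i, ?_⟩
          rw [SimpleGraph.mem_neighborFinset] at hk ⊢
          exact hk.symm
        omega

lemma aux_sym_swap (P : Fin n → Fin n → Prop) [DecidableRel P]
    (hP : ∀ i j, P i j → P j i) (f : Fin n → Fin n → ℕ) :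
    ∑ i, ∑ j ∈ Finset.univ.filter (fun j => P i j), f i j
      = ∑ i, ∑ j ∈ Finset.univ.filter (fun j => P i j), f j i := by
  simp_rw [Finset.sum_filter]
  rw [Finset.sum_comm]
  refine Finset.sum_congr rfl fun i _ => Finset.sum_congr rfl fun j _ => ?_
  exact if_congr ⟨hP j i, hP i j⟩ rfl rfl

end AuxLemmas

set_option maxHeartbeats 1000000 in
/-- For any graph `G` on `[n]`,
`2 ∑_{i ∼ j} d_i d_j = ∑ d_i² + 2 ∑ d_i t_i + ∑_{i ≁ j} (d_i + d_j)|N_i ∩ N_j|`,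
where the edge sum counts each edge once and the last sum is over unordered pairs of
distinct nonadjacent vertices; here the identity is stated doubled, with both the edge sum
and the nonadjacent-pair sum taken over ordered pairs. -/
theorem degree_product_decomposition (n : ℕ) (G : SimpleGraph (Fin n))
    [DecidableRel G.Adj] :
    2 * ∑ p ∈ Finset.univ.filter (fun p : Fin n × Fin n => G.Adj p.1 p.2),
          G.degree p.1 * G.degree p.2 =
      2 * ∑ i : Fin n, (G.degree i) ^ 2 + 4 * ∑ i : Fin n, G.degree i * triCount G i +
        ∑ p ∈ Finset.univ.filter
            (fun p : Fin n × Fin n => p.1 ≠ p.2 ∧ ¬ G.Adj p.1 p.2),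
          (G.degree p.1 + G.degree p.2) *
            (G.neighborFinset p.1 ∩ G.neighborFinset p.2).card := by
  have hLHS : ∑ p ∈ Finset.univ.filter (fun p : Fin n × Fin n => G.Adj p.1 p.2),
      G.degree p.1 * G.degree p.2
      = ∑ i, ∑ j ∈ G.neighborFinset i, G.degree i * G.degree j := by
    rw [Finset.sum_filter, ← Finset.univ_product_univ, Finset.sum_product]
    refine Finset.sum_congr rfl fun i _ => ?_
    rw [SimpleGraph.neighborFinset_eq_filter, Finset.sum_filter]
  have hXeq : ∑ p ∈ Finset.univ.filter
        (fun p : Fin n × Fin n => p.1 ≠ p.2 ∧ ¬ G.Adj p.1 p.2),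
        (G.degree p.1 + G.degree p.2) *
          (G.neighborFinset p.1 ∩ G.neighborFinset p.2).card
      = ∑ i, ∑ j ∈ Finset.univ.filter (fun j => i ≠ j ∧ ¬ G.Adj i j),
          (G.degree i + G.degree j) *
            (G.neighborFinset i ∩ G.neighborFinset j).card := by
    rw [Finset.sum_filter, ← Finset.univ_product_univ, Finset.sum_product]
    exact Finset.sum_congr rfl fun i _ => (Finset.sum_filter _ _).symm
  rw [hLHS, hXeq]
  have hcomm : ∀ i j : Fin n,
      (G.neighborFinset j ∩ G.neighborFinset i).card
        = (G.neighborFinset i ∩ G.neighborFinset j).card := by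
    intro i j; rw [Finset.inter_comm]
  -- f1 : A + Dsq = S1
  have f1 : (∑ i, ∑ j ∈ Finset.univ.filter (fun j => j ≠ i),
        G.degree i * (G.neighborFinset i ∩ G.neighborFinset j).card)
      + ∑ i : Fin n, (G.degree i) ^ 2
      = ∑ i, ∑ j ∈ G.neighborFinset i, G.degree i * G.degree j := by
    rw [← Finset.sum_add_distrib]
    refine Finset.sum_congr rfl fun i _ => ?_
    rw [← Finset.mul_sum, sq, ← Nat.mul_add, aux_L1 G i, Finset.mul_sum]
  -- f2 : adjacent unweighted sum = 2 * T
  have f2 : ∑ i, ∑ j ∈ G.neighborFinset i,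
        G.degree i * (G.neighborFinset i ∩ G.neighborFinset j).card
      = 2 * ∑ i : Fin n, G.degree i * triCount G i := by
    rw [Finset.mul_sum]
    refine Finset.sum_congr rfl fun i _ => ?_
    rw [← Finset.mul_sum, aux_L2 G i]
    ring
  -- f3 : full distinct weighted sum = 2 * A
  have f3 : ∑ i, ∑ j ∈ Finset.univ.filter (fun j => j ≠ i),
        (G.degree i + G.degree j) * (G.neighborFinset i ∩ G.neighborFinset j).card
      = 2 * ∑ i, ∑ j ∈ Finset.univ.filter (fun j => j ≠ i),
          G.degree i * (G.neighborFinset i ∩ G.neighborFinset j).card := by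
    have hswap := aux_sym_swap (n := n) (fun i j => j ≠ i) (fun i j h => h.symm)
        (fun i j => G.degree j * (G.neighborFinset i ∩ G.neighborFinset j).card)
    have expand : ∀ i : Fin n, ∑ j ∈ Finset.univ.filter (fun j => j ≠ i),
        (G.degree i + G.degree j) * (G.neighborFinset i ∩ G.neighborFinset j).card
        = (∑ j ∈ Finset.univ.filter (fun j => j ≠ i),
            G.degree i * (G.neighborFinset i ∩ G.neighborFinset j).card)
          + ∑ j ∈ Finset.univ.filter (fun j => j ≠ i),
            G.degree j * (G.neighborFinset i ∩ G.neighborFinset j).card := by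
      intro i
      rw [← Finset.sum_add_distrib]
      exact Finset.sum_congr rfl fun j _ => add_mul _ _ _
    refine Eq.trans (Finset.sum_congr rfl (fun i _ => expand i)) ?_
    rw [Finset.sum_add_distrib, two_mul]
    congr 1
    rw [hswap]
    exact Finset.sum_congr rfl fun i _ => Finset.sum_congr rfl fun j _ => by
      rw [hcomm]
  -- f4 : adjacent weighted sum = 4 * T
  have f4 : ∑ i, ∑ j ∈ G.neighborFinset i,
        (G.degree i + G.degree j) * (G.neighborFinset i ∩ G.neighborFinset j).card
      = 4 * ∑ i : Fin n, G.degree i * triCount G i := by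
    have hswap := aux_sym_swap (n := n) (fun i j => G.Adj i j)
        (fun i j h => h.symm)
        (fun i j => G.degree j * (G.neighborFinset i ∩ G.neighborFinset j).card)
    have expand : ∀ i : Fin n, ∑ j ∈ G.neighborFinset i,
        (G.degree i + G.degree j) * (G.neighborFinset i ∩ G.neighborFinset j).card
        = (∑ j ∈ G.neighborFinset i,
            G.degree i * (G.neighborFinset i ∩ G.neighborFinset j).card)
          + ∑ j ∈ G.neighborFinset i,
            G.degree j * (G.neighborFinset i ∩ G.neighborFinset j).card := by
      intro i
      rw [← Finset.sum_add_distrib]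
      exact Finset.sum_congr rfl fun j _ => add_mul _ _ _
    refine Eq.trans (Finset.sum_congr rfl (fun i _ => expand i)) ?_
    rw [Finset.sum_add_distrib]
    have e1 : ∑ i, ∑ j ∈ G.neighborFinset i,
        G.degree j * (G.neighborFinset i ∩ G.neighborFinset j).card
        = ∑ i, ∑ j ∈ G.neighborFinset i,
          G.degree i * (G.neighborFinset i ∩ G.neighborFinset j).card := by
      have h1 : ∀ i : Fin n, G.neighborFinset i
          = Finset.univ.filter (fun j => G.Adj i j) :=
        fun i => SimpleGraph.neighborFinset_eq_filter G
      calc ∑ i, ∑ j ∈ G.neighborFinset i,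
            G.degree j * (G.neighborFinset i ∩ G.neighborFinset j).card
          = ∑ i, ∑ j ∈ Finset.univ.filter (fun j => G.Adj i j),
            G.degree j * (G.neighborFinset i ∩ G.neighborFinset j).card := by
            exact Finset.sum_congr rfl fun i _ => by rw [← h1]
        _ = ∑ i, ∑ j ∈ Finset.univ.filter (fun j => G.Adj i j),
            G.degree i * (G.neighborFinset j ∩ G.neighborFinset i).card := hswap
        _ = ∑ i, ∑ j ∈ G.neighborFinset i,
            G.degree i * (G.neighborFinset i ∩ G.neighborFinset j).card := by
            refine Finset.sum_congr rfl fun i _ => ?_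
            rw [← h1]
            exact Finset.sum_congr rfl fun j _ => by rw [hcomm]
    rw [e1, f2]
    ring
  -- f5 : split distinct weighted sum
  have f5 : ∑ i, ∑ j ∈ Finset.univ.filter (fun j => j ≠ i),
        (G.degree i + G.degree j) * (G.neighborFinset i ∩ G.neighborFinset j).card
      = (∑ i, ∑ j ∈ G.neighborFinset i,
          (G.degree i + G.degree j) * (G.neighborFinset i ∩ G.neighborFinset j).card)
        + ∑ i, ∑ j ∈ Finset.univ.filter (fun j => i ≠ j ∧ ¬ G.Adj i j),
          (G.degree i + G.degree j) *
            (G.neighborFinset i ∩ G.neighborFinset j).card := by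
    rw [← Finset.sum_add_distrib]
    refine Finset.sum_congr rfl fun i _ => ?_
    rw [← Finset.sum_filter_add_sum_filter_not
      (Finset.univ.filter (fun j => j ≠ i)) (fun j => G.Adj i j)]
    congr 1
    · congr 1
      ext j
      simp only [Finset.mem_filter, Finset.mem_univ, true_and,
        SimpleGraph.mem_neighborFinset]
      exact ⟨fun h => h.2, fun h => ⟨h.ne', h⟩⟩
    · congr 1
      ext j
      simp only [Finset.mem_filter, Finset.mem_univ, true_and]
      exact ⟨fun h => ⟨h.1.symm, h.2⟩, fun h => ⟨h.1.symm, h.2⟩⟩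
  omega
end

section
/- If G is a graph on n vertices whose complement is triangle-free, then 8·t₄(G) + 2·t₄'(G) = Σ_{i∈[n]} (d_i − 2)·t_i − Σ_{i∈[n]} C(d_i, 3), where t₄(G) is the number of 4-cliques, t₄'(G) the number of induced K₄-minus-an-edge subgraphs, and t_i the number of triangles containing vertex i. -/
open Finset

/-- The number of edges of `G` lying inside the vertex set `s`. -/
def edgesIn {n : ℕ} (G : SimpleGraph (Fin n)) [DecidableRel G.Adj] (s : Finset (Fin n)) : ℕ :=
  (G.edgeFinset.filter (fun e => ∀ x ∈ e, x ∈ s)).card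

/-- The number of 4-element vertex subsets of `G` inducing exactly 5 edges
(i.e. `K₄` minus an edge). -/
def count4' {n : ℕ} (G : SimpleGraph (Fin n)) [DecidableRel G.Adj] : ℕ :=
  ((Finset.univ.powersetCard 4).filter (fun s : Finset (Fin n) => edgesIn G s = 5)).card

theorem card_eq_four' {α : Type*} [DecidableEq α] {s : Finset α} :
    s.card = 4 ↔ ∃ a b c d, a ≠ b ∧ a ≠ c ∧ a ≠ d ∧ b ≠ c ∧ b ≠ d ∧ c ≠ d ∧ s = {a, b, c, d} := by
  constructor
  · rw [show (4:ℕ) = 3 + 1 from rfl, Finset.card_eq_succ]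
    rintro ⟨a, t, hat, rfl, ht⟩
    obtain ⟨b, c, d, hbc, hbd, hcd, rfl⟩ := Finset.card_eq_three.1 ht
    simp only [Finset.mem_insert, Finset.mem_singleton] at hat
    push_neg at hat
    exact ⟨a, b, c, d, hat.1, hat.2.1, hat.2.2, hbc, hbd, hcd, rfl⟩
  · rintro ⟨a, b, c, d, h1, h2, h3, h4, h5, h6, rfl⟩
    rw [Finset.card_insert_of_notMem (by simp [h1, h2, h3]),
      Finset.card_insert_of_notMem (by simp [h4, h5]),
      Finset.card_insert_of_notMem (by simp [h6]), Finset.card_singleton]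

variable {n : ℕ} (G : SimpleGraph (Fin n)) [DecidableRel G.Adj]

/-- Local weight `f` of a 4-set: over each vertex `j` such that the rest is a triangle,
the number of edges from `j` into that triangle. -/
def fS (s : Finset (Fin n)) : ℕ :=
  ∑ j ∈ s.filter (fun j => s.erase j ∈ G.cliqueFinset 3),
    ((s.erase j).filter (fun x => G.Adj j x)).card

/-- Local weight `g` of a 4-set: the number of its vertices adjacent to all others. -/
def gS (s : Finset (Fin n)) : ℕ :=
  (s.filter (fun i => ∀ x ∈ s.erase i, G.Adj i x)).card

theorem edgesIn_quad {a b c d : Fin n} (h1 : a ≠ b) (h2 : a ≠ c) (h3 : a ≠ d)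
    (h4 : b ≠ c) (h5 : b ≠ d) (h6 : c ≠ d) :
    edgesIn G {a, b, c, d} =
      (if G.Adj a b then 1 else 0) + (if G.Adj a c then 1 else 0) + (if G.Adj a d then 1 else 0)
      + (if G.Adj b c then 1 else 0) + (if G.Adj b d then 1 else 0) + (if G.Adj c d then 1 else 0) := by
  have key : (G.edgeFinset.filter (fun e => ∀ x ∈ e, x ∈ ({a,b,c,d} : Finset (Fin n)))) =
      (({s(a,b), s(a,c), s(a,d), s(b,c), s(b,d), s(c,d)} : Finset (Sym2 (Fin n))).filter
        (fun e => e ∈ G.edgeFinset)) := by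
    ext e
    induction e with
    | _ x y =>
      simp only [Finset.mem_filter, SimpleGraph.mem_edgeFinset, SimpleGraph.mem_edgeSet,
        Finset.mem_insert, Finset.mem_singleton, Sym2.eq_iff]
      constructor
      · rintro ⟨hadj, hmem⟩
        have hx := hmem x (by simp)
        have hy := hmem y (by simp)
        have hxy := G.ne_of_adj hadj
        refine ⟨?_, hadj⟩
        rcases hx with rfl|rfl|rfl|rfl <;> rcases hy with rfl|rfl|rfl|rfl <;> simp_all
      · rintro ⟨hmem, hadj⟩
        refine ⟨hadj, ?_⟩
        intro z hz
        rw [Sym2.mem_iff] at hz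
        rcases hz with rfl|rfl <;> rcases hmem with h|h|h|h|h|h <;>
          rcases h with ⟨rfl, rfl⟩|⟨rfl,rfl⟩ <;> simp
  rw [edgesIn, key, Finset.card_filter]
  rw [Finset.sum_insert (by simp [Sym2.eq_iff]; tauto),
      Finset.sum_insert (by simp [Sym2.eq_iff]; tauto),
      Finset.sum_insert (by simp [Sym2.eq_iff]; tauto),
      Finset.sum_insert (by simp [Sym2.eq_iff]; tauto),
      Finset.sum_insert (by simp [Sym2.eq_iff]; tauto),
      Finset.sum_singleton]
  simp only [SimpleGraph.mem_edgeFinset, SimpleGraph.mem_edgeSet]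
  ring

theorem is4Clique_quad_iff {a b c d : Fin n} (h1 : a ≠ b) (h2 : a ≠ c) (h3 : a ≠ d)
    (h4 : b ≠ c) (h5 : b ≠ d) (h6 : c ≠ d) :
    ({a,b,c,d} : Finset (Fin n)) ∈ G.cliqueFinset 4 ↔
      G.Adj a b ∧ G.Adj a c ∧ G.Adj a d ∧ G.Adj b c ∧ G.Adj b d ∧ G.Adj c d := by
  rw [SimpleGraph.mem_cliqueFinset_iff, SimpleGraph.isNClique_iff]
  constructor
  · rintro ⟨hc, -⟩
    exact ⟨hc (by simp) (by simp) h1, hc (by simp) (by simp) h2, hc (by simp) (by simp) h3,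
      hc (by simp) (by simp) h4, hc (by simp) (by simp) h5, hc (by simp) (by simp) h6⟩
  · rintro ⟨p1,p2,p3,p4,p5,p6⟩
    constructor
    · intro x hx y hy hxy
      simp only [Finset.coe_insert, Finset.coe_singleton, Set.mem_insert_iff,
        Set.mem_singleton_iff] at hx hy
      rcases hx with rfl|rfl|rfl|rfl <;> rcases hy with rfl|rfl|rfl|rfl <;>
        first | exact absurd rfl hxy | assumption | (exact (by assumption : G.Adj _ _).symm)
    · rw [Finset.card_insert_of_notMem (by simp [h1, h2, h3]),
        Finset.card_insert_of_notMem (by simp [h4, h5]),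
        Finset.card_insert_of_notMem (by simp [h6]), Finset.card_singleton]

theorem erase_quad {a b c d : Fin n} (h1 : a ≠ b) (h2 : a ≠ c) (h3 : a ≠ d) :
    ({a,b,c,d} : Finset (Fin n)).erase a = {b,c,d} :=
  Finset.erase_insert (by simp [h1, h2, h3])

theorem quad_set_perm {a b c d : Fin n} : ({a,b,c,d} : Finset (Fin n)) = {b,a,c,d} := by
  ext x; simp; tauto

theorem is3Clique_quad_iff {x y z : Fin n} :
    ({x,y,z} : Finset (Fin n)) ∈ G.cliqueFinset 3 ↔ G.Adj x y ∧ G.Adj x z ∧ G.Adj y z := by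
  rw [SimpleGraph.mem_cliqueFinset_iff, SimpleGraph.is3Clique_triple_iff]

theorem card_filter_adj_triple (j : Fin n) {x y z : Fin n} (hxy : x ≠ y) (hxz : x ≠ z)
    (hyz : y ≠ z) :
    (({x,y,z} : Finset (Fin n)).filter (fun t => G.Adj j t)).card =
      (if G.Adj j x then 1 else 0) + (if G.Adj j y then 1 else 0)
        + (if G.Adj j z then 1 else 0) := by
  rw [Finset.card_filter, Finset.sum_insert (by simp [hxy, hxz]),
    Finset.sum_insert (by simp [hyz]), Finset.sum_singleton]
  ring

theorem forall_triple {P : Fin n → Prop} {x y z : Fin n} :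
    (∀ t ∈ ({x,y,z} : Finset (Fin n)), P t) ↔ P x ∧ P y ∧ P z := by
  simp [Finset.forall_mem_insert]

theorem quad_main {a b c d : Fin n} (h1 : a ≠ b) (h2 : a ≠ c) (h3 : a ≠ d)
    (h4 : b ≠ c) (h5 : b ≠ d) (h6 : c ≠ d)
    (hh : ∀ x y z : Fin n, x ≠ y → x ≠ z → y ≠ z → (G.Adj x y ∨ G.Adj x z ∨ G.Adj y z)) :
    (fS G {a,b,c,d} : ℤ) - gS G {a,b,c,d} =
      (if ({a,b,c,d} : Finset (Fin n)) ∈ G.cliqueFinset 4 then 8 else 0)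
      + (if edgesIn G {a,b,c,d} = 5 then 2 else 0) := by
  have ea : ({a,b,c,d} : Finset (Fin n)).erase a = {b,c,d} := erase_quad h1 h2 h3
  have eb : ({a,b,c,d} : Finset (Fin n)).erase b = {a,c,d} := by
    rw [quad_set_perm]; exact erase_quad h1.symm h4 h5
  have ec : ({a,b,c,d} : Finset (Fin n)).erase c = {a,b,d} := by
    rw [show ({a,b,c,d} : Finset (Fin n)) = {c,a,b,d} by ext x; simp; tauto]
    exact erase_quad h2.symm h4.symm h6
  have ed : ({a,b,c,d} : Finset (Fin n)).erase d = {a,b,c} := by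
    rw [show ({a,b,c,d} : Finset (Fin n)) = {d,a,b,c} by ext x; simp; tauto]
    exact erase_quad h3.symm h5.symm h6.symm
  have hfS : fS G {a,b,c,d} =
      (if ({b,c,d} : Finset (Fin n)) ∈ G.cliqueFinset 3 then
        (if G.Adj a b then 1 else 0) + (if G.Adj a c then 1 else 0)
          + (if G.Adj a d then 1 else 0) else 0)
      + (if ({a,c,d} : Finset (Fin n)) ∈ G.cliqueFinset 3 then
        (if G.Adj b a then 1 else 0) + (if G.Adj b c then 1 else 0)
          + (if G.Adj b d then 1 else 0) else 0)
      + (if ({a,b,d} : Finset (Fin n)) ∈ G.cliqueFinset 3 then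
        (if G.Adj c a then 1 else 0) + (if G.Adj c b then 1 else 0)
          + (if G.Adj c d then 1 else 0) else 0)
      + (if ({a,b,c} : Finset (Fin n)) ∈ G.cliqueFinset 3 then
        (if G.Adj d a then 1 else 0) + (if G.Adj d b then 1 else 0)
          + (if G.Adj d c then 1 else 0) else 0) := by
    rw [fS, Finset.sum_filter,
      Finset.sum_insert (by simp [h1, h2, h3]),
      Finset.sum_insert (by simp [h4, h5]),
      Finset.sum_insert (by simp [h6]), Finset.sum_singleton, ea, eb, ec, ed,
      card_filter_adj_triple G a h4 h5 h6, card_filter_adj_triple G b h2 h3 h6,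
      card_filter_adj_triple G c h1 h3 h5, card_filter_adj_triple G d h1 h2 h4]
    ring
  have hgS : gS G {a,b,c,d} =
      (if (G.Adj a b ∧ G.Adj a c ∧ G.Adj a d) then 1 else 0)
      + (if (G.Adj b a ∧ G.Adj b c ∧ G.Adj b d) then 1 else 0)
      + (if (G.Adj c a ∧ G.Adj c b ∧ G.Adj c d) then 1 else 0)
      + (if (G.Adj d a ∧ G.Adj d b ∧ G.Adj d c) then 1 else 0) := by
    rw [gS, Finset.card_filter,
      Finset.sum_insert (by simp [h1, h2, h3]),
      Finset.sum_insert (by simp [h4, h5]),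
      Finset.sum_insert (by simp [h6]), Finset.sum_singleton, ea, eb, ec, ed]
    simp only [forall_triple]
    ring
  have H1 := hh a b c h1 h2 h4
  have H2 := hh a b d h1 h3 h5
  have H3 := hh a c d h2 h3 h6
  have H4 := hh b c d h4 h5 h6
  rw [hfS, hgS, edgesIn_quad G h1 h2 h3 h4 h5 h6]
  simp only [is4Clique_quad_iff G h1 h2 h3 h4 h5 h6, is3Clique_quad_iff,
    G.adj_comm b a, G.adj_comm c a, G.adj_comm c b, G.adj_comm d a, G.adj_comm d b,
    G.adj_comm d c]
  push_cast
  clear ea eb ec ed hfS hgS hh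
  by_cases p1 : G.Adj a b <;> by_cases p2 : G.Adj a c <;> by_cases p3 : G.Adj a d <;>
    by_cases p4 : G.Adj b c <;> by_cases p5 : G.Adj b d <;> by_cases p6 : G.Adj c d <;>
    simp only [p1, p2, p3, p4, p5, p6, or_true, true_or, or_false, false_or, or_self,
      true_and, and_true, false_and, and_false, and_self, if_true, if_false,
      ite_true, ite_false] at H1 H2 H3 H4 ⊢ <;> norm_num

theorem GB : ∑ i : Fin n, (G.degree i).choose 3 =
    ∑ s ∈ Finset.univ.powersetCard 4, gS G s := by
  have L : ∀ i : Fin n, (G.degree i).choose 3 = ((G.neighborFinset i).powersetCard 3).card := by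
    intro i; rw [Finset.card_powersetCard]; rfl
  simp_rw [L]
  simp only [gS]
  rw [← Finset.card_sigma, ← Finset.card_sigma]
  apply Finset.card_bij' (fun p _ => (⟨insert p.1 p.2, p.1⟩ : (_ : Finset (Fin n)) × Fin n))
    (fun q _ => (⟨q.2, q.1.erase q.2⟩ : (_ : Fin n) × Finset (Fin n)))
  · rintro ⟨i, W⟩ hp
    simp only [Finset.mem_sigma, Finset.mem_univ, true_and, Finset.mem_powersetCard] at hp
    obtain ⟨hW, hc⟩ := hp
    have hiW : i ∉ W := fun hm => G.notMem_neighborFinset_self i (hW hm)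
    simp only [Finset.mem_sigma, Finset.mem_powersetCard_univ, Finset.mem_filter]
    refine ⟨by rw [Finset.card_insert_of_notMem hiW, hc], Finset.mem_insert_self _ _, ?_⟩
    intro x hx
    rw [Finset.erase_insert hiW] at hx
    exact (G.mem_neighborFinset i x).1 (hW hx)
  · rintro ⟨s, j⟩ hq
    simp only [Finset.mem_sigma, Finset.mem_powersetCard_univ, Finset.mem_filter] at hq
    obtain ⟨hc, hjs, hQ⟩ := hq
    simp only [Finset.mem_sigma, Finset.mem_univ, true_and, Finset.mem_powersetCard]
    constructor
    · intro x hx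
      exact (G.mem_neighborFinset j x).2 (hQ x hx)
    · rw [Finset.card_erase_of_mem hjs, hc]
  · rintro ⟨i, W⟩ hp
    simp only [Finset.mem_sigma, Finset.mem_univ, true_and, Finset.mem_powersetCard] at hp
    have hiW : i ∉ W := fun hm => G.notMem_neighborFinset_self i (hp.1 hm)
    simp [Finset.erase_insert hiW]
  · rintro ⟨s, j⟩ hq
    simp only [Finset.mem_sigma, Finset.mem_powersetCard_univ, Finset.mem_filter] at hq
    simp [Finset.insert_erase hq.2.1]

theorem step1 (i : Fin n) : ((G.degree i : ℤ) - 2) * (triCount G i : ℤ) =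
    ∑ T ∈ (G.cliqueFinset 3).filter (fun s => i ∈ s), ((G.neighborFinset i \ T).card : ℤ) := by
  have key : ∀ T ∈ (G.cliqueFinset 3).filter (fun s => i ∈ s),
      ((G.neighborFinset i \ T).card : ℤ) = (G.degree i : ℤ) - 2 := by
    intro T hT
    simp only [Finset.mem_filter, SimpleGraph.mem_cliqueFinset_iff] at hT
    obtain ⟨⟨hcl, hcard⟩, hiT⟩ := hT
    have hsub : T.erase i ⊆ G.neighborFinset i := by
      intro x hx
      rw [Finset.mem_erase] at hx
      rw [SimpleGraph.mem_neighborFinset]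
      exact hcl hiT hx.2 (Ne.symm hx.1)
    have hdiff : G.neighborFinset i \ T = G.neighborFinset i \ T.erase i := by
      ext x
      simp only [Finset.mem_sdiff, Finset.mem_erase]
      constructor
      · rintro ⟨hx, hxT⟩; exact ⟨hx, fun hcon => hxT hcon.2⟩
      · rintro ⟨hx, hxT⟩
        refine ⟨hx, fun hmem => ?_⟩
        rcases eq_or_ne x i with rfl | hne
        · exact G.notMem_neighborFinset_self _ hx
        · exact hxT ⟨hne, hmem⟩
    have h2 : (T.erase i).card = 2 := by rw [Finset.card_erase_of_mem hiT, hcard]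
    have hle : 2 ≤ (G.neighborFinset i).card := h2 ▸ Finset.card_le_card hsub
    rw [hdiff, Finset.card_sdiff_of_subset hsub, h2,
      show (G.neighborFinset i).card = G.degree i from rfl,
      Nat.cast_sub (show 2 ≤ G.degree i from hle)]
    norm_num
  rw [Finset.sum_congr rfl key, Finset.sum_const, triCount, nsmul_eq_mul, mul_comm]

theorem step2 : (∑ i : Fin n, ∑ T ∈ (G.cliqueFinset 3).filter (fun s => i ∈ s),
      (G.neighborFinset i \ T).card) =
    ∑ s ∈ Finset.univ.powersetCard 4, fS G s := by
  simp only [fS]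
  simp_rw [← Finset.card_sigma]
  apply Finset.card_bij'
    (fun p _ => (⟨insert p.2.2 p.2.1, p.2.2, p.1⟩ :
      (_ : Finset (Fin n)) × (_ : Fin n) × Fin n))
    (fun q _ => (⟨q.2.2, q.1.erase q.2.1, q.2.1⟩ :
      (_ : Fin n) × (_ : Finset (Fin n)) × Fin n))
  · rintro ⟨i, T, j⟩ hp
    simp only [Finset.mem_sigma, Finset.mem_univ, true_and, Finset.mem_filter,
      Finset.mem_sdiff, SimpleGraph.mem_cliqueFinset_iff, SimpleGraph.mem_neighborFinset] at hp
    obtain ⟨⟨hT3, hiT⟩, hij, hjT⟩ := hp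
    have hTe : (insert j T).erase j = T := Finset.erase_insert hjT
    simp only [Finset.mem_sigma, Finset.mem_powersetCard_univ, Finset.mem_filter, hTe,
      SimpleGraph.mem_cliqueFinset_iff]
    exact ⟨by rw [Finset.card_insert_of_notMem hjT, hT3.2],
      ⟨Finset.mem_insert_self _ _, hT3⟩, hiT, hij.symm⟩
  · rintro ⟨s, j, i⟩ hq
    simp only [Finset.mem_sigma, Finset.mem_powersetCard_univ, Finset.mem_filter] at hq
    obtain ⟨hc4, ⟨hjs, hT3⟩, his, hji⟩ := hq
    simp only [Finset.mem_sigma, Finset.mem_univ, true_and, Finset.mem_filter,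
      Finset.mem_sdiff, SimpleGraph.mem_neighborFinset]
    exact ⟨⟨hT3, his⟩, hji.symm, Finset.notMem_erase j s⟩
  · rintro ⟨i, T, j⟩ hp
    simp only [Finset.mem_sigma, Finset.mem_univ, true_and, Finset.mem_filter,
      Finset.mem_sdiff] at hp
    simp [Finset.erase_insert hp.2.2]
  · rintro ⟨s, j, i⟩ hq
    simp only [Finset.mem_sigma, Finset.mem_powersetCard_univ, Finset.mem_filter] at hq
    simp [Finset.insert_erase hq.2.1.1]

theorem GC1 : (8 : ℤ) * (G.cliqueFinset 4).card =
    ∑ s ∈ Finset.univ.powersetCard 4, (if s ∈ G.cliqueFinset 4 then (8:ℤ) else 0) := by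
  rw [Finset.sum_ite, Finset.sum_const, Finset.sum_const_zero, add_zero]
  have hfil : (Finset.univ.powersetCard 4).filter (fun s => s ∈ G.cliqueFinset 4)
      = G.cliqueFinset 4 := by
    ext s
    simp only [Finset.mem_filter, Finset.mem_powersetCard_univ, and_iff_right_iff_imp]
    intro hs
    exact (SimpleGraph.mem_cliqueFinset_iff.1 hs).2
  rw [hfil, nsmul_eq_mul, mul_comm]

theorem GC2 : (2 : ℤ) * count4' G =
    ∑ s ∈ Finset.univ.powersetCard 4, (if edgesIn G s = 5 then (2:ℤ) else 0) := by
  rw [Finset.sum_ite, Finset.sum_const, Finset.sum_const_zero, add_zero, count4',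
    nsmul_eq_mul, mul_comm]

/-- If `G` is a graph on `n` vertices whose complement is triangle-free, then
`8 t₄(G) + 2 t₄'(G) = ∑ i (d_i - 2) t_i - ∑ i C(d_i, 3)`. -/
theorem t4_t4'_identity (n : ℕ) (G : SimpleGraph (Fin n)) [DecidableRel G.Adj]
    (h : Gᶜ.CliqueFree 3) :
    (8 * (G.cliqueFinset 4).card + 2 * count4' G : ℤ) =
      ∑ i : Fin n, ((G.degree i : ℤ) - 2) * (triCount G i : ℤ) -
        ∑ i : Fin n, ((G.degree i).choose 3 : ℤ) := by
  have hh : ∀ x y z : Fin n, x ≠ y → x ≠ z → y ≠ z → (G.Adj x y ∨ G.Adj x z ∨ G.Adj y z) := by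
    intro x y z hxy hxz hyz
    by_contra hcon
    push_neg at hcon
    exact h {x,y,z} (SimpleGraph.is3Clique_triple_iff.2
      ⟨(SimpleGraph.compl_adj G _ _).2 ⟨hxy, hcon.1⟩, (SimpleGraph.compl_adj G _ _).2 ⟨hxz, hcon.2.1⟩,
        (SimpleGraph.compl_adj G _ _).2 ⟨hyz, hcon.2.2⟩⟩)
  have GAz : ∑ i : Fin n, ((G.degree i : ℤ) - 2) * (triCount G i : ℤ)
      = ∑ s ∈ Finset.univ.powersetCard 4, (fS G s : ℤ) := by
    rw [Finset.sum_congr rfl (fun i _ => step1 G i)]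
    exact_mod_cast congrArg (Nat.cast : ℕ → ℤ) (step2 G)
  have GBz : ∑ i : Fin n, ((G.degree i).choose 3 : ℤ)
      = ∑ s ∈ Finset.univ.powersetCard 4, (gS G s : ℤ) := by
    exact_mod_cast congrArg (Nat.cast : ℕ → ℤ) (GB G)
  have key : ∀ s ∈ Finset.univ.powersetCard 4,
      (fS G s : ℤ) - (gS G s : ℤ) = (if s ∈ G.cliqueFinset 4 then (8:ℤ) else 0)
        + (if edgesIn G s = 5 then (2:ℤ) else 0) := by
    intro s hs
    rw [Finset.mem_powersetCard_univ] at hs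
    obtain ⟨a, b, c, d, h1, h2, h3, h4, h5, h6, rfl⟩ := card_eq_four'.1 hs
    exact quad_main G h1 h2 h3 h4 h5 h6 hh
  rw [GAz, GBz, ← Finset.sum_sub_distrib, Finset.sum_congr rfl key,
    Finset.sum_add_distrib, ← GC1, ← GC2]
end

section
/- The complement of the lexicographic product C₅[K_p] (the 5-cycle blown up by cliques of size p) is triangle-free. -/
open Finset

/-- The lexicographic product `C₅[K_p]`: vertices are pairs `(i, x)` with `i` a vertex of
the 5-cycle (modelled as `ZMod 5`) and `x ∈ [p]`; `(i,x)` is adjacent to `(j,y)` iff `i`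
and `j` are adjacent on the 5-cycle, or `i = j` and `x ≠ y`. -/
def C5K (p : ℕ) : SimpleGraph (ZMod 5 × Fin p) :=
  SimpleGraph.fromRel (fun a b => a.1 = b.1 + 1 ∨ (a.1 = b.1 ∧ a.2 ≠ b.2))

lemma zmod5_aux : ∀ a b c : ZMod 5, a = b + 1 ∨ b = a + 1 ∨ a = b ∨ a = c + 1 ∨
    c = a + 1 ∨ a = c ∨ b = c + 1 ∨ c = b + 1 ∨ b = c := by decide

/-- The complement of `C₅[K_p]` is triangle-free. -/
theorem c5k_compl_triangleFree (p : ℕ) : (C5K p)ᶜ.CliqueFree 3 := by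
  intro t ht
  rw [SimpleGraph.is3Clique_iff] at ht
  obtain ⟨a, b, c, hab, hac, hbc, -⟩ := ht
  simp only [C5K, SimpleGraph.compl_adj, SimpleGraph.fromRel_adj, not_and, not_or,
    ne_eq] at hab hac hbc
  obtain ⟨hab1, hab2⟩ := hab
  obtain ⟨hac1, hac2⟩ := hac
  obtain ⟨hbc1, hbc2⟩ := hbc
  push_neg at hab2 hac2 hbc2
  obtain ⟨⟨A1, A2⟩, A3, A4⟩ := hab2 hab1
  obtain ⟨⟨B1, B2⟩, B3, B4⟩ := hac2 hac1
  obtain ⟨⟨C1, C2⟩, C3, C4⟩ := hbc2 hbc1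
  have hab' : a.1 ≠ b.1 := fun h => hab1 (Prod.ext h (A2 h))
  have hac' : a.1 ≠ c.1 := fun h => hac1 (Prod.ext h (B2 h))
  have hbc' : b.1 ≠ c.1 := fun h => hbc1 (Prod.ext h (C2 h))
  rcases zmod5_aux a.1 b.1 c.1 with h|h|h|h|h|h|h|h|h
  exacts [A1 h, A3 h, hab' h, B1 h, B3 h, hac' h, C1 h, C3 h, hbc' h]
end

section
/- The graph C₅[K_p] contains at least 5·(C(2p,4) − C(p,4)) cliques of size 4. -/
open Finset

attribute [local instance] Classical.propDecidable

noncomputable def Bset (p : ℕ) (i : ZMod 5) : Finset (Finset (ZMod 5 × Fin p)) :=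
  (powersetCard 4 (({i, i+1} : Finset (ZMod 5)) ×ˢ (univ : Finset (Fin p)))).filter
    (fun s => ∃ v ∈ s, v.1 = i + 1)

lemma self_ne_add_one (i : ZMod 5) : i ≠ i + 1 := by
  intro h
  nth_rewrite 1 [← add_zero i] at h
  have h0 : (0 : ZMod 5) = 1 := add_left_cancel h
  exact absurd h0 (by decide)

lemma Bset_card (p : ℕ) (i : ZMod 5) :
    (Bset p i).card = (2 * p).choose 4 - p.choose 4 := by
  classical
  unfold Bset
  set X : Finset (ZMod 5 × Fin p) := ({i, i+1} : Finset (ZMod 5)) ×ˢ (univ : Finset (Fin p))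
    with hXdef
  have hX : X.card = 2 * p := by
    rw [hXdef, card_product, card_insert_of_notMem (by simpa using self_ne_add_one i),
      card_singleton, card_univ, Fintype.card_fin]
  have hneg : (powersetCard 4 X).filter (fun s => ¬ ∃ v ∈ s, v.1 = i + 1)
      = powersetCard 4 (({i} : Finset (ZMod 5)) ×ˢ (univ : Finset (Fin p))) := by
    ext s
    simp only [mem_filter, mem_powersetCard]
    constructor
    · rintro ⟨⟨hsub, hcard⟩, hno⟩
      push_neg at hno
      refine ⟨fun v hv => ?_, hcard⟩
      have hvX := hsub hv
      rw [hXdef] at hvX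
      simp only [mem_product, mem_insert, mem_singleton, mem_univ, and_true] at hvX ⊢
      rcases hvX with h | h
      · exact h
      · exact absurd h (hno v hv)
    · rintro ⟨hsub, hcard⟩
      refine ⟨⟨fun v hv => ?_, hcard⟩, ?_⟩
      · have := hsub hv
        simp only [mem_product, mem_singleton, mem_univ, and_true] at this
        rw [hXdef]
        simp [mem_product, this]
      · push_neg
        intro v hv
        have := hsub hv
        simp only [mem_product, mem_singleton, mem_univ, and_true] at this
        rw [this]
        exact self_ne_add_one i
  have hkey := Finset.card_filter_add_card_filter_not
    (s := powersetCard 4 X) (p := fun s => ∃ v ∈ s, v.1 = i + 1)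
  rw [hneg] at hkey
  have h1 : (powersetCard 4 X).card = (2*p).choose 4 := by
    rw [card_powersetCard, hX]
  have h2 : (powersetCard 4 (({i} : Finset (ZMod 5)) ×ˢ (univ : Finset (Fin p)))).card
      = p.choose 4 := by
    rw [card_powersetCard]
    simp [card_product]
  rw [h1, h2] at hkey
  omega

lemma Bset_clique (p : ℕ) (i : ZMod 5) {s : Finset (ZMod 5 × Fin p)} (hs : s ∈ Bset p i) :
    s ∈ (C5K p).cliqueFinset 4 := by
  classical
  rw [SimpleGraph.mem_cliqueFinset_iff]
  simp only [Bset, mem_filter, mem_powersetCard] at hs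
  obtain ⟨⟨hsub, hcard⟩, -⟩ := hs
  refine ⟨fun a ha b hb hab => ?_, hcard⟩
  have haX := hsub ha
  have hbX := hsub hb
  simp only [mem_product, mem_insert, mem_singleton, mem_univ, and_true] at haX hbX
  refine ⟨hab, ?_⟩
  rcases haX with ha1 | ha1 <;> rcases hbX with hb1 | hb1
  · left; right; constructor
    · rw [ha1, hb1]
    · intro h2; exact hab (Prod.ext (by rw [ha1, hb1]) h2)
  · right; left; rw [ha1, hb1]
  · left; left; rw [ha1, hb1]
  · left; right; constructor
    · rw [ha1, hb1]
    · intro h2; exact hab (Prod.ext (by rw [ha1, hb1]) h2)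

lemma Bset_disjoint (p : ℕ) {i j : ZMod 5} (hij : i ≠ j) :
    Disjoint (Bset p i) (Bset p j) := by
  classical
  rw [Finset.disjoint_left]
  intro s hsi hsj
  simp only [Bset, mem_filter, mem_powersetCard] at hsi hsj
  obtain ⟨⟨hsubi, -⟩, v, hv, hv1⟩ := hsi
  obtain ⟨⟨hsubj, -⟩, w, hw, hw1⟩ := hsj
  have hvj := hsubj hv
  have hwi := hsubi hw
  simp only [mem_product, mem_insert, mem_singleton, mem_univ, and_true] at hvj hwi
  rw [hv1] at hvj
  rw [hw1] at hwi
  -- hvj : i + 1 = j ∨ i + 1 = j + 1 ; hwi : j + 1 = i ∨ j + 1 = i + 1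
  rcases hvj with h1 | h1
  · rcases hwi with h2 | h2
    · rw [← h1] at h2
      have : (2 : ZMod 5) = 0 := by
        have := add_right_cancel (a := (2:ZMod 5)) (b := i) (c := 0)
        have h3 : i + 1 + 1 = i := h2
        have : (2 : ZMod 5) + i = 0 + i := by ring_nf; ring_nf at h3; linear_combination h3
        exact add_right_cancel this
      have : ¬ ((2 : ZMod 5) = 0) := by decide
      tauto
    · exact hij (add_right_cancel h2.symm)
  · exact hij (add_right_cancel h1)

/-- `C₅[K_p]` contains at least `5 (C(2p,4) - C(p,4))` cliques of size 4. -/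
theorem c5k_four_cliques (p : ℕ) :
    5 * ((2 * p).choose 4 - p.choose 4) ≤ ((C5K p).cliqueFinset 4).card := by
  classical
  have hsub : (univ : Finset (ZMod 5)).biUnion (fun i => Bset p i) ⊆ (C5K p).cliqueFinset 4 := by
    intro s hs
    rw [mem_biUnion] at hs
    obtain ⟨i, -, hi⟩ := hs
    exact Bset_clique p i hi
  have hcard : ((univ : Finset (ZMod 5)).biUnion (fun i => Bset p i)).card
      = ∑ i : ZMod 5, (Bset p i).card := by
    apply card_biUnion
    intro i _ j _ hij
    exact Bset_disjoint p hij
  calc 5 * ((2 * p).choose 4 - p.choose 4)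
      = ∑ i : ZMod 5, (Bset p i).card := by
        simp [Bset_card]
    _ = ((univ : Finset (ZMod 5)).biUnion (fun i => Bset p i)).card := hcard.symm
    _ ≤ ((C5K p).cliqueFinset 4).card := card_le_card hsub
end

section
/- For every n divisible by 5, there exists a graph G on n vertices with no independent set of size 3 such that the number of 4-cliques of G is at most (1/200)n⁴ + (1/100)n³. -/
open Finset

attribute [local instance] Classical.propDecidable

/-!
Take `C₅[K_m]` with `n = 5m`. Its complement is `C₅` blown up into independent sets, so a triangle
there would project to a triangle of `C̄₅ ≅ C₅`. A clique of `C₅[K_m]` projects to a clique of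
`C₅`, so it lies in two consecutive parts `i, i + 1` and, choosing `i` to be a part it meets, is
not contained in part `i + 1`. Hence there are at most `5 (C(2m, 4) - C(m, 4)) =
(5/24)(15m⁴ - 42m³ + 33m² - 6m)` 4-cliques, and `n⁴/200 + n³/100` exceeds this by
`(5/24) m (48m² - 33m + 6) ≥ 0`.
-/

namespace SimpleGraph

variable {α β : Type*}

theorem CliqueFree.of_hom {G : SimpleGraph α} {H : SimpleGraph β} {n : ℕ} (f : G →g H)
    (h : H.CliqueFree n) : G.CliqueFree n := by
  rw [cliqueFree_iff] at h ⊢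
  exact ⟨fun c ↦ h.elim ⟨f.comp c.toHom, Hom.injective_of_top_hom _⟩⟩

/-- The blow-up `H[K_β]`, in which every vertex of `H` becomes a clique indexed by `β`. -/
def cliqueBlowup (H : SimpleGraph α) (β : Type*) : SimpleGraph (α × β) where
  Adj u v := u ≠ v ∧ (u.1 = v.1 ∨ H.Adj u.1 v.1)
  symm := ⟨fun _ _ h ↦ ⟨h.1.symm, h.2.imp Eq.symm fun h ↦ h.symm⟩⟩
  loopless := ⟨fun _ h ↦ h.1 rfl⟩

@[simp]
theorem cliqueBlowup_adj {H : SimpleGraph α} {u v : α × β} :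
    (H.cliqueBlowup β).Adj u v ↔ u ≠ v ∧ (u.1 = v.1 ∨ H.Adj u.1 v.1) :=
  Iff.rfl

variable {H : SimpleGraph α}

theorem compl_cliqueBlowup_cliqueFree {n : ℕ} (h : Hᶜ.CliqueFree n) :
    (H.cliqueBlowup β)ᶜ.CliqueFree n :=
  h.of_hom
    { toFun := Prod.fst
      map_rel' := fun {u v} huv ↦ by
        rw [compl_adj, cliqueBlowup_adj] at huv
        exact (compl_adj _ _ _).2 ⟨fun e ↦ huv.2 ⟨huv.1, .inl e⟩, fun a ↦ huv.2 ⟨huv.1, .inr a⟩⟩ }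

theorem IsClique.image_fst_of_cliqueBlowup {s : Set (α × β)}
    (hs : (H.cliqueBlowup β).IsClique s) : H.IsClique (Prod.fst '' s) := by
  rintro _ ⟨u, hu, rfl⟩ _ ⟨v, hv, rfl⟩ hne
  exact (hs hu hv fun h ↦ hne (congrArg Prod.fst h)).2.resolve_left hne

end SimpleGraph

open SimpleGraph

theorem compl_cycleGraph_five_cliqueFree : (cycleGraph 5)ᶜ.CliqueFree 3 := by
  unfold CliqueFree; decide

theorem cycleGraph_five_isClique_subset {t : Finset (Fin 5)}
    (ht : (cycleGraph 5).IsClique (t : Set (Fin 5))) (hne : t.Nonempty) :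
    ∃ i ∈ t, t ⊆ {i, i + 1} := by
  revert t; decide

theorem card_cliqueFinset_cliqueBlowup_cycleGraph_five_le (β : Type*) [Fintype β]
    [DecidableEq β] {k : ℕ} (hk : k ≠ 0) :
    #((cliqueBlowup (cycleGraph 5) β).cliqueFinset k) ≤
      5 * ((2 * Fintype.card β).choose k - (Fintype.card β).choose k) := by
  have hsucc (i : Fin 5) : i ≠ i + 1 := by simp
  set strip : Fin 5 → Finset (Fin 5 × β) := fun i ↦ {i, i + 1} ×ˢ univ
  set part : Fin 5 → Finset (Fin 5 × β) := fun i ↦ {i} ×ˢ univ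
  have hcover : (cliqueBlowup (cycleGraph 5) β).cliqueFinset k ⊆
      univ.biUnion fun i ↦ (strip i).powersetCard k \ (part (i + 1)).powersetCard k := by
    intro s hs
    rw [mem_cliqueFinset_iff] at hs
    have hne : (s.image Prod.fst).Nonempty := by
      rw [image_nonempty, ← card_pos, hs.2]
      exact Nat.pos_of_ne_zero hk
    obtain ⟨i, hi, hsi⟩ := cycleGraph_five_isClique_subset
      (by push_cast; exact hs.1.image_fst_of_cliqueBlowup) hne
    simp only [mem_biUnion, mem_univ, true_and, mem_sdiff, mem_powersetCard]
    refine ⟨i, ⟨fun x hx ↦ ?_, hs.2⟩, fun h ↦ ?_⟩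
    · exact mem_product.2 ⟨hsi (mem_image_of_mem _ hx), mem_univ _⟩
    · obtain ⟨u, hu, rfl⟩ := mem_image.1 hi
      exact hsucc u.1 (mem_singleton.1 (mem_product.1 (h.1 hu)).1)
  have hcard (i : Fin 5) : #((strip i).powersetCard k \ (part (i + 1)).powersetCard k) =
      (2 * Fintype.card β).choose k - (Fintype.card β).choose k := by
    rw [card_sdiff_of_subset (powersetCard_mono (product_subset_product_left (by simp))),
      card_powersetCard, card_powersetCard, card_product, card_product, card_pair (hsucc i),
      card_singleton, card_univ, one_mul]
  calc _ ≤ _ := card_le_card hcover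
    _ ≤ ∑ i, _ := card_biUnion_le
    _ = _ := by simp only [hcard, sum_const, card_univ, Fintype.card_fin, smul_eq_mul]

theorem Nat.cast_choose_four (n : ℕ) :
    (n.choose 4 : ℝ) = n * (n - 1) * (n - 2) * (n - 3) / 24 := by
  rw [Nat.cast_choose_eq_descPochhammer_div]
  simp [descPochhammer_succ_eval, Nat.factorial]

theorem five_mul_choose_four_sub_le (m : ℕ) :
    ((5 * ((2 * m).choose 4 - m.choose 4) : ℕ) : ℝ) ≤
      1 / 200 * ((5 * m : ℕ) : ℝ) ^ 4 + 1 / 100 * ((5 * m : ℕ) : ℝ) ^ 3 := by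
  have hm : (0 : ℝ) ≤ m := m.cast_nonneg
  rw [Nat.cast_mul, Nat.cast_sub (Nat.choose_le_choose 4 (by omega)), Nat.cast_choose_four,
    Nat.cast_choose_four]
  push_cast
  nlinarith [mul_nonneg hm (sq_nonneg (m - 1 / 3 : ℝ))]

/-- For every `n` divisible by 5, there is a graph on `n` vertices with no independent set
of size 3 (triangle-free complement) having at most `(1/200) n⁴ + (1/100) n³` 4-cliques. -/
theorem exists_graph_few_four_cliques (n : ℕ) (hn : 5 ∣ n) :
    ∃ G : SimpleGraph (Fin n), Gᶜ.CliqueFree 3 ∧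
      ((G.cliqueFinset 4).card : ℝ) ≤
        (1 / 200) * (n : ℝ) ^ 4 + (1 / 100) * (n : ℝ) ^ 3 := by
  obtain ⟨m, rfl⟩ := hn
  set G := cliqueBlowup (cycleGraph 5) (Fin m)
  set e := finProdFinEquiv (m := 5) (n := m)
  refine ⟨G.map e.toEmbedding,
    (compl_cliqueBlowup_cliqueFree compl_cycleGraph_five_cliqueFree).comap (Embedding.complEquiv (Iso.map e G).symm.toEmbedding).isContained, ?_⟩
  refine (Nat.cast_le.2 ?_).trans (five_mul_choose_four_sub_le m)
  calc _ = #(G.cliqueFinset 4) := by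
        rw [← card_map ⟨map e.toEmbedding, Finset.map_injective _⟩, ← cliqueFinset_map_of_equiv]
        congr!
    _ ≤ _ := by simpa using card_cliqueFinset_cliqueBlowup_cycleGraph_five_le (Fin m) four_ne_zero
end
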